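/- Let u be a classical solution on Ω ⊆ ℝᵈ (bounded with smooth boundary) of a·u = div(K(x) ∇φ(u)) with u = u_D ≥ 0 on ∂Ω, where a > 0, K(x) ≥ k_min > 0 is smooth, and φ is C¹ and strictly increasing with φ(0) = 0. Then 0 ≤ u(x) ≤ max_{∂Ω} u_D for all x ∈ Ω (maximum principle). -/

import Mathlib

open Metric Set Filter Topology

/-- Pointwise identity relating `fderiv` and `gradient`. -/
lemma fderiv_apply_eq_inner_gradient {d : ℕ} (w : EuclideanSpace ℝ (Fin d) → ℝ)
    (y v : EuclideanSpace ℝ (Fin d)) :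
    fderiv ℝ w y v = inner ℝ (gradient w y) v := by
  rw [gradient, InnerProductSpace.toDual_symm_apply]

lemma interior_max_key {d : ℕ} (Ω : Set (EuclideanSpace ℝ (Fin d))) (hΩo : IsOpen Ω)
    (a : ℝ) (ha : 0 < a)
    (K : EuclideanSpace ℝ (Fin d) → ℝ) (kmin : ℝ) (hkmin : 0 < kmin)
    (hK : ∀ x, kmin ≤ K x) (hKsmooth : ContDiff ℝ (⊤ : ℕ∞) K)
    (φ : ℝ → ℝ) (hφ : ContDiff ℝ 1 φ) (hφmono : Monotone φ)
    (u : EuclideanSpace ℝ (Fin d) → ℝ) (hu2 : ContDiffOn ℝ 2 u Ω)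
    (hpde : ∀ x ∈ Ω,
      a * u x =
        ∑ i, fderiv ℝ (fun y => K y • gradient (fun z => φ (u z)) y) x
          (EuclideanSpace.single i 1) i)
    (x₀ : EuclideanSpace ℝ (Fin d)) (hx₀ : x₀ ∈ Ω) (hmax : IsLocalMax u x₀) :
    a * u x₀ ≤ 0 := by
  by_contra hpos
  push_neg at hpos
  set w : EuclideanSpace ℝ (Fin d) → ℝ := fun z => φ (u z) with hw
  set F : EuclideanSpace ℝ (Fin d) → EuclideanSpace ℝ (Fin d) :=
    fun y => K y • gradient w y with hF
  have hKpos : ∀ y, 0 < K y := fun y => lt_of_lt_of_le hkmin (hK y)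
  have hKne : ∀ y, K y ≠ 0 := fun y => (hKpos y).ne'
  -- w is differentiable on Ω
  have hwdiff : ∀ y ∈ Ω, DifferentiableAt ℝ w y := by
    intro y hy
    have hud : DifferentiableAt ℝ u y :=
      ((hu2.contDiffAt (hΩo.mem_nhds hy)).differentiableAt (by norm_num))
    exact (hφ.differentiable (by simp) (u y)).comp y hud
  -- w has a local max at x₀
  have hwmax : IsLocalMax w x₀ := hmax.comp_mono hφmono
  have hgrad0 : gradient w x₀ = 0 := by
    rw [gradient, hwmax.fderiv_eq_zero, map_zero]
  have hF0 : F x₀ = 0 := by simp [hF, hgrad0]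
  -- positivity of the "divergence"
  have hS : 0 < ∑ i, fderiv ℝ F x₀ (EuclideanSpace.single i 1) i := by
    rw [← hpde x₀ hx₀]; exact hpos
  -- F must be differentiable at x₀
  have hdF : DifferentiableAt ℝ F x₀ := by
    by_contra h
    rw [fderiv_zero_of_not_differentiableAt h] at hS
    simp at hS
  -- G = K⁻¹ • F equals gradient w everywhere
  set G : EuclideanSpace ℝ (Fin d) → EuclideanSpace ℝ (Fin d) :=
    fun y => (K y)⁻¹ • F y with hG
  have hGgrad : G = fun y => gradient w y := by
    funext y
    simp [hG, hF, smul_smul, inv_mul_cancel₀ (hKne y)]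
  have hKinv : DifferentiableAt ℝ (fun y => (K y)⁻¹) x₀ :=
    (hKsmooth.differentiable (by simp) x₀).inv (hKne x₀)
  have hGdiff : DifferentiableAt ℝ G x₀ := hKinv.smul hdF
  have hGfderiv : fderiv ℝ G x₀ = (K x₀)⁻¹ • fderiv ℝ F x₀ := by
    rw [hG]
    rw [fderiv_fun_smul hKinv hdF, hF0]
    ext v
    simp
  have hSG : 0 < ∑ i, fderiv ℝ G x₀ (EuclideanSpace.single i 1) i := by
    have : ∀ i : Fin d, fderiv ℝ G x₀ (EuclideanSpace.single i 1) i
        = (K x₀)⁻¹ * fderiv ℝ F x₀ (EuclideanSpace.single i 1) i := by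
      intro i; rw [hGfderiv]; simp
    rw [Finset.sum_congr rfl (fun i _ => this i), ← Finset.mul_sum]
    exact mul_pos (inv_pos.mpr (hKpos x₀)) hS
  -- pick a coordinate with positive diagonal entry
  obtain ⟨i, -, hi⟩ := Finset.exists_lt_of_sum_lt (by simpa using hSG :
    ∑ i : Fin d, (0:ℝ) < ∑ i, fderiv ℝ G x₀ (EuclideanSpace.single i 1) i)
  set e : EuclideanSpace ℝ (Fin d) := EuclideanSpace.single i 1 with he
  set B : ℝ := fderiv ℝ G x₀ e i with hB
  -- the line through x₀ in direction e
  have hline : ∀ s : ℝ, HasDerivAt (fun t : ℝ => x₀ + t • e) e s := by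
    intro s
    have h1 : HasDerivAt (fun t : ℝ => t • e) ((1:ℝ) • e) s :=
      (hasDerivAt_id s).smul_const e
    rw [one_smul] at h1
    exact h1.const_add x₀
  have h00 : x₀ + (0:ℝ) • e = x₀ := by simp
  set g : ℝ → ℝ := fun t => gradient w (x₀ + t • e) i with hg
  -- g has derivative B > 0 at 0
  have hgderiv : HasDerivAt g B 0 := by
    have h1 : HasDerivAt (fun t : ℝ => G (x₀ + t • e)) (fderiv ℝ G x₀ e) 0 := by
      have := (hGdiff.hasFDerivAt.comp_hasDerivAt_of_eq 0 (hline 0) h00.symm)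
      exact this
    have h2 := (EuclideanSpace.proj (𝕜 := ℝ) i).hasFDerivAt.comp_hasDerivAt 0 h1
    simp only [Function.comp_def] at h2
    have h3 : (fun t : ℝ => EuclideanSpace.proj (𝕜 := ℝ) i (G (x₀ + t • e))) = g := by
      funext t; rw [hGgrad]; rfl
    rw [h3] at h2
    exact h2
  have hg00 : g 0 = 0 := by simp [hg, h00, hgrad0]
  -- g is positive just to the right of 0
  have hgpos : ∀ᶠ t in 𝓝[>] (0:ℝ), 0 < g t := by
    have h1 : Tendsto (slope g 0) (𝓝[≠] 0) (𝓝 B) :=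
      hasDerivAt_iff_tendsto_slope.mp hgderiv
    have h2 : Tendsto (slope g 0) (𝓝[>] 0) (𝓝 B) :=
      h1.mono_left (nhdsWithin_mono _ (fun t ht => ne_of_gt ht))
    have h3 : ∀ᶠ t in 𝓝[>] (0:ℝ), 0 < slope g 0 t :=
      h2.eventually (eventually_gt_nhds hi)
    filter_upwards [h3, self_mem_nhdsWithin] with t ht ht0
    have : slope g 0 t = g t / t := by rw [slope_def_field]; simp [hg00]
    rw [this] at ht
    exact (div_pos_iff.mp ht).resolve_right (fun h => absurd ht0 (by simp; linarith [h.2]))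
      |>.1
  obtain ⟨δ, hδpos, hδ⟩ := mem_nhdsGT_iff_exists_Ioo_subset.mp hgpos
  -- neighborhood where u ≤ u x₀ and inside Ω
  have hnbhd : Ω ∩ {y | u y ≤ u x₀} ∈ 𝓝 x₀ :=
    Filter.inter_mem (hΩo.mem_nhds hx₀) hmax
  obtain ⟨ε, hεpos, hε⟩ := Metric.mem_nhds_iff.mp hnbhd
  set t : ℝ := min δ ε / 2 with ht
  have hmpos : 0 < min δ ε := lt_min hδpos hεpos
  have htpos : 0 < t := by rw [ht]; linarith
  have htm : t < min δ ε := by rw [ht]; linarith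
  have htδ : t < δ := htm.trans_le (min_le_left _ _)
  have htε : t < ε := htm.trans_le (min_le_right _ _)
  have hmemball : ∀ s : ℝ, s ∈ Icc (0:ℝ) t → x₀ + s • e ∈ ball x₀ ε := by
    intro s hs
    rw [mem_ball, dist_eq_norm]
    have : x₀ + s • e - x₀ = s • e := by abel
    rw [this, norm_smul, he, EuclideanSpace.norm_single]
    simp only [norm_one, mul_one, Real.norm_eq_abs]
    rw [abs_of_nonneg hs.1]
    linarith [hs.2]
  have hmemΩ : ∀ s : ℝ, s ∈ Icc (0:ℝ) t → x₀ + s • e ∈ Ω := fun s hs =>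
    (hε (hmemball s hs)).1
  -- ψ is strictly monotone on [0, t]
  set ψ : ℝ → ℝ := fun s => w (x₀ + s • e) with hψ
  have hψderiv : ∀ s ∈ Icc (0:ℝ) t, HasDerivAt ψ (g s) s := by
    intro s hs
    have hd := hwdiff _ (hmemΩ s hs)
    have h1 := hd.hasFDerivAt.comp_hasDerivAt s (hline s)
    have h2 : fderiv ℝ w (x₀ + s • e) e = g s := by
      rw [fderiv_apply_eq_inner_gradient, he, EuclideanSpace.inner_single_right]
      simp [hg, he]
    rw [h2] at h1
    exact h1
  have hmono : StrictMonoOn ψ (Icc 0 t) := by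
    apply strictMonoOn_of_deriv_pos (convex_Icc 0 t)
    · intro s hs
      exact (hψderiv s hs).continuousAt.continuousWithinAt
    · intro s hs
      rw [interior_Icc] at hs
      rw [(hψderiv s ⟨le_of_lt hs.1, le_of_lt hs.2⟩).deriv]
      exact hδ ⟨hs.1, lt_trans hs.2 htδ⟩
  have hlt : ψ 0 < ψ t :=
    hmono (left_mem_Icc.mpr htpos.le) (right_mem_Icc.mpr htpos.le) htpos
  have hψ0 : ψ 0 = w x₀ := by simp [hψ, h00]
  -- contradiction with local max
  have hle : u (x₀ + t • e) ≤ u x₀ :=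
    (hε (hmemball t (right_mem_Icc.mpr htpos.le))).2
  have : ψ t ≤ ψ 0 := by
    rw [hψ0]
    exact hφmono hle
  linarith

/-- Maximum principle / L∞ bound for the stationary degenerate diffusion problem
`a u = div(K ∇φ(u))` on a bounded domain with nonnegative Dirichlet data:
`0 ≤ u ≤ max_{∂Ω} u_D`. -/
theorem degenerate_diffusion_max_principle {d : ℕ}
    (Ω : Set (EuclideanSpace ℝ (Fin d)))
    (hΩo : IsOpen Ω) (hΩb : Bornology.IsBounded Ω) (hΩne : Ω.Nonempty)
    (a : ℝ) (ha : 0 < a)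
    (K : EuclideanSpace ℝ (Fin d) → ℝ) (kmin : ℝ) (hkmin : 0 < kmin)
    (hK : ∀ x, kmin ≤ K x) (hKsmooth : ContDiff ℝ (⊤ : ℕ∞) K)
    (φ : ℝ → ℝ) (hφ : ContDiff ℝ 1 φ) (hφmono : StrictMono φ) (hφ0 : φ 0 = 0)
    (u : EuclideanSpace ℝ (Fin d) → ℝ)
    (hu : ContinuousOn u (closure Ω)) (hu2 : ContDiffOn ℝ 2 u Ω)
    -- the PDE `a u = div (K ∇φ(u))` holds pointwise in Ω
    (hpde : ∀ x ∈ Ω,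
      a * u x =
        ∑ i, fderiv ℝ (fun y => K y • gradient (fun z => φ (u z)) y) x
          (EuclideanSpace.single i 1) i)
    (uD : EuclideanSpace ℝ (Fin d) → ℝ)
    (hbc : ∀ x ∈ frontier Ω, u x = uD x ∧ 0 ≤ uD x) :
    ∀ x ∈ Ω, 0 ≤ u x ∧ u x ≤ sSup (uD '' frontier Ω) := by
  have hcl : IsCompact (closure Ω) :=
    Metric.isCompact_of_isClosed_isBounded isClosed_closure hΩb.closure
  have hclne : (closure Ω).Nonempty := hΩne.closure
  obtain ⟨x₀, hx₀cl, hx₀max⟩ := hcl.exists_isMaxOn hclne hu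
  obtain ⟨x₁, hx₁cl, hx₁min⟩ := hcl.exists_isMinOn hclne hu
  have hsplit : ∀ y ∈ closure Ω, y ∈ Ω ∨ y ∈ frontier Ω := by
    intro y hy
    by_cases h : y ∈ Ω
    · exact Or.inl h
    · exact Or.inr ⟨hy, by rwa [hΩo.interior_eq]⟩
  -- the PDE for -u with φ̃ s = -φ(-s)
  have hpde_neg : ∀ x ∈ Ω,
      a * (fun y => -u y) x =
        ∑ i, fderiv ℝ
          (fun y => K y • gradient (fun z => (fun s => -φ (-s)) ((fun y => -u y) z)) y) x
          (EuclideanSpace.single i 1) i := by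
    intro x hx
    have hfun : (fun y => K y • gradient (fun z => (fun s => -φ (-s)) ((fun y => -u y) z)) y)
        = fun y => -(K y • gradient (fun z => φ (u z)) y) := by
      funext y
      have h1 : (fun z => (fun s => -φ (-s)) ((fun y => -u y) z))
          = fun z => -(φ (u z)) := by funext z; simp
      rw [h1]
      have h2 : gradient (fun z => -(φ (u z))) y = -gradient (fun z => φ (u z)) y := by
        rw [gradient, gradient, fderiv_fun_neg, map_neg]
      rw [h2, smul_neg]
    rw [hfun]
    have : ∀ i : Fin d,
        fderiv ℝ (fun y => -(K y • gradient (fun z => φ (u z)) y)) x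
          (EuclideanSpace.single i 1) i
        = -(fderiv ℝ (fun y => K y • gradient (fun z => φ (u z)) y) x
          (EuclideanSpace.single i 1) i) := by
      intro i
      rw [fderiv_fun_neg]
      simp
    rw [Finset.sum_congr rfl (fun i _ => this i), Finset.sum_neg_distrib, ← hpde x hx]
    ring
  -- minimum: u ≥ 0 on closure
  have hmin0 : 0 ≤ u x₁ := by
    rcases hsplit x₁ hx₁cl with h | h
    · have hloc : IsLocalMax (fun y => -u y) x₁ := by
        have : closure Ω ∈ 𝓝 x₁ := mem_of_superset (hΩo.mem_nhds h) subset_closure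
        exact IsMinFilter.neg (by
          filter_upwards [this] with y hy using hx₁min hy)
      have := interior_max_key Ω hΩo a ha K kmin hkmin hK hKsmooth
        (fun s => -φ (-s)) (by
          have : ContDiff ℝ 1 (fun s : ℝ => -φ (-s)) := (hφ.comp contDiff_neg).neg
          exact this)
        (fun s t hst => by
          simp only [neg_le_neg_iff]
          exact (hφmono.monotone (neg_le_neg hst)))
        (fun y => -u y) hu2.neg hpde_neg x₁ h hloc
      have hne : a * -u x₁ ≤ 0 := this
      nlinarith
    · rcases hbc x₁ h with ⟨he, hpos⟩
      rw [he]; exact hpos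
  -- bounds on sSup
  have hBdd : BddAbove (uD '' frontier Ω) := by
    have himg : uD '' frontier Ω = u '' frontier Ω :=
      (Set.image_congr (fun x hx => ((hbc x hx).1).symm))
    rw [himg]
    exact ((hcl.image_of_continuousOn hu).bddAbove).mono
      (Set.image_mono frontier_subset_closure)
  have hM0 : 0 ≤ sSup (uD '' frontier Ω) := by
    rcases (frontier Ω).eq_empty_or_nonempty with h | ⟨y, hy⟩
    · rw [h, Set.image_empty, Real.sSup_empty]
    · exact le_trans (hbc y hy).2 (le_csSup hBdd ⟨y, hy, rfl⟩)
  -- maximum bound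
  have hmaxM : u x₀ ≤ sSup (uD '' frontier Ω) := by
    rcases hsplit x₀ hx₀cl with h | h
    · have hloc : IsLocalMax u x₀ := by
        have : closure Ω ∈ 𝓝 x₀ := mem_of_superset (hΩo.mem_nhds h) subset_closure
        filter_upwards [this] with y hy using hx₀max hy
      have := interior_max_key Ω hΩo a ha K kmin hkmin hK hKsmooth
        φ hφ hφmono.monotone u hu2 hpde x₀ h hloc
      nlinarith
    · rw [(hbc x₀ h).1]
      exact le_csSup hBdd ⟨x₀, h, rfl⟩
  intro x hx
  have hxcl : x ∈ closure Ω := subset_closure hx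
  exact ⟨le_trans hmin0 (hx₁min hxcl), le_trans (hx₀max hxcl) hmaxM⟩
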